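/- arXiv:1906.04551 — 4 statements merged into one kernel-verified Lean document; each statement's English description precedes it below -/
import Mathlib

section
/- Let (V, μ, α) be a multiplicative Hom-Jordan algebra over a field F. If D₁ is a generalized α^k-derivation of V and D₂ is a generalized α^s-derivation of V (k, s ≥ 0), then α ∘ D₁ is a generalized α^(k+1)-derivation of V, and the commutator [D₁, D₂] = D₁ ∘ D₂ − D₂ ∘ D₁ is a generalized α^(k+s)-derivation of V. -/
/-- A linear map commuting with `α` commutes with all powers of `α`. -/
lemma comm_pow {F V : Type*} [Field F] [AddCommGroup V] [Module F V]
    {α D : V →ₗ[F] V} (h : D ∘ₗ α = α ∘ₗ D) (n : ℕ) (x : V) :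
    D ((α ^ n) x) = (α ^ n) (D x) := by
  induction n generalizing x with
  | zero => simp
  | succ m ih =>
    have hα := congrArg (fun f : V →ₗ[F] V => f x) h
    simp only [LinearMap.comp_apply] at hα
    rw [pow_succ, Module.End.mul_apply, Module.End.mul_apply, ih (α x), hα]

/-- `D` is a generalized `α^k`-derivation of the Hom-Jordan algebra `(V, μ, α)`. -/
def IsGenDer {F V : Type*} [Field F] [AddCommGroup V] [Module F V]
    (μ : V →ₗ[F] V →ₗ[F] V) (α : V →ₗ[F] V) (k : ℕ) (D : V →ₗ[F] V) : Prop :=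
  D ∘ₗ α = α ∘ₗ D ∧ ∃ D' D'' : V →ₗ[F] V,
    D' ∘ₗ α = α ∘ₗ D' ∧ D'' ∘ₗ α = α ∘ₗ D'' ∧
    ∀ x y : V, μ (D x) ((α ^ k) y) + μ ((α ^ k) x) (D' y) = D'' (μ x y)

theorem stmt0 {F V : Type*} [Field F] [AddCommGroup V] [Module F V]
    (μ : V →ₗ[F] V →ₗ[F] V) (α : V →ₗ[F] V)
    (hcomm : ∀ x y : V, μ x y = μ y x)
    (hJ : ∀ x y : V, μ (α (α x)) (μ y (μ x x)) = μ (μ (α x) y) (α (μ x x)))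
    (hmult : ∀ x y : V, α (μ x y) = μ (α x) (α y))
    (k s : ℕ) (D₁ D₂ : V →ₗ[F] V)
    (h₁ : IsGenDer μ α k D₁) (h₂ : IsGenDer μ α s D₂) :
    IsGenDer μ α (k + 1) (α ∘ₗ D₁) ∧
    IsGenDer μ α (k + s) (D₁ ∘ₗ D₂ - D₂ ∘ₗ D₁) := by
  obtain ⟨hc₁, D₁', D₁'', hc₁', hc₁'', hd₁⟩ := h₁
  obtain ⟨hc₂, D₂', D₂'', hc₂', hc₂'', hd₂⟩ := h₂
  constructor
  · refine ⟨?_, α ∘ₗ D₁', α ∘ₗ D₁'', ?_, ?_, ?_⟩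
    · ext x; simp only [LinearMap.comp_apply]
      exact congrArg α (congrArg (fun f : V →ₗ[F] V => f x) hc₁)
    · ext x; simp only [LinearMap.comp_apply]
      exact congrArg α (congrArg (fun f : V →ₗ[F] V => f x) hc₁')
    · ext x; simp only [LinearMap.comp_apply]
      exact congrArg α (congrArg (fun f : V →ₗ[F] V => f x) hc₁'')
    · intro x y
      simp only [LinearMap.comp_apply]
      have h1 : (α ^ (k + 1)) y = α ((α ^ k) y) := by
        rw [add_comm, pow_add]; simp
      have h2 : (α ^ (k + 1)) x = α ((α ^ k) x) := by
        rw [add_comm, pow_add]; simp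
      rw [h1, h2, ← hmult, ← hmult, ← map_add, hd₁]
  · refine ⟨?_, D₁' ∘ₗ D₂' - D₂' ∘ₗ D₁', D₁'' ∘ₗ D₂'' - D₂'' ∘ₗ D₁'', ?_, ?_, ?_⟩
    · ext x
      simp only [LinearMap.sub_comp, LinearMap.comp_sub, LinearMap.sub_apply,
        LinearMap.comp_apply]
      have e1 := congrArg (fun f : V →ₗ[F] V => f (D₂ x)) hc₁
      have e2 := congrArg (fun f : V →ₗ[F] V => f x) hc₂
      have e3 := congrArg (fun f : V →ₗ[F] V => f (D₁ x)) hc₂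
      have e4 := congrArg (fun f : V →ₗ[F] V => f x) hc₁
      simp only [LinearMap.comp_apply] at e1 e2 e3 e4
      rw [e2, e1, e4, e3]
    · ext x
      simp only [LinearMap.sub_comp, LinearMap.comp_sub, LinearMap.sub_apply,
        LinearMap.comp_apply]
      have e1 := congrArg (fun f : V →ₗ[F] V => f (D₂' x)) hc₁'
      have e2 := congrArg (fun f : V →ₗ[F] V => f x) hc₂'
      have e3 := congrArg (fun f : V →ₗ[F] V => f (D₁' x)) hc₂'
      have e4 := congrArg (fun f : V →ₗ[F] V => f x) hc₁'
      simp only [LinearMap.comp_apply] at e1 e2 e3 e4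
      rw [e2, e1, e4, e3]
    · ext x
      simp only [LinearMap.sub_comp, LinearMap.comp_sub, LinearMap.sub_apply,
        LinearMap.comp_apply]
      have e1 := congrArg (fun f : V →ₗ[F] V => f (D₂'' x)) hc₁''
      have e2 := congrArg (fun f : V →ₗ[F] V => f x) hc₂''
      have e3 := congrArg (fun f : V →ₗ[F] V => f (D₁'' x)) hc₂''
      have e4 := congrArg (fun f : V →ₗ[F] V => f x) hc₁''
      simp only [LinearMap.comp_apply] at e1 e2 e3 e4
      rw [e2, e1, e4, e3]
    · intro x y
      simp only [LinearMap.sub_apply, LinearMap.comp_apply]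
      have key1 : D₁'' (D₂'' (μ x y))
          = μ (D₁ (D₂ x)) ((α ^ (k + s)) y) + μ ((α ^ k) (D₂ x)) (D₁' ((α ^ s) y))
            + (μ (D₁ ((α ^ s) x)) ((α ^ k) (D₂' y)) + μ ((α ^ (k + s)) x) (D₁' (D₂' y))) := by
        rw [← hd₂ x y, map_add, ← hd₁, ← hd₁]
        rw [pow_add]
        simp [LinearMap.comp_apply, mul_comm]
      have key2 : D₂'' (D₁'' (μ x y))
          = μ (D₂ (D₁ x)) ((α ^ (k + s)) y) + μ ((α ^ s) (D₁ x)) (D₂' ((α ^ k) y))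
            + (μ (D₂ ((α ^ k) x)) ((α ^ s) (D₁' y)) + μ ((α ^ (k + s)) x) (D₂' (D₁' y))) := by
        have hsk : ∀ z : V, (α ^ s) ((α ^ k) z) = (α ^ (k + s)) z := by
          intro z
          rw [add_comm, pow_add, Module.End.mul_apply]
        have hks : ∀ z : V, (α ^ k) ((α ^ s) z) = (α ^ (k + s)) z := by
          intro z
          rw [pow_add, Module.End.mul_apply]
        rw [← hd₁ x y, map_add, ← hd₂, ← hd₂]
        simp [Module.End.mul_apply, hsk, hks]
      rw [key1, key2]
      have c1 : (α ^ k) (D₂ x) = D₂ ((α ^ k) x) := (comm_pow hc₂ k x).symm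
      have c2 : D₁' ((α ^ s) y) = (α ^ s) (D₁' y) := comm_pow hc₁' s y
      have c3 : D₁ ((α ^ s) x) = (α ^ s) (D₁ x) := comm_pow hc₁ s x
      have c4 : (α ^ k) (D₂' y) = D₂' ((α ^ k) y) := (comm_pow hc₂' k y).symm
      rw [c1, c2, c3, c4]
      simp only [map_sub, LinearMap.sub_apply]
      abel
end

section
/- Let (V, μ, α) be a multiplicative Hom-Jordan algebra over a field F. If D₁ is an α^k-quasiderivation of V and D₂ lies in the α^k-quasicentroid QC_{α^k}(V) (k ≥ 0), then D₁ + D₂ is a generalized α^k-derivation of V. -/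
/-- `D` is an `α^k`-quasiderivation of the Hom-Jordan algebra `(V, μ, α)`. -/
def IsQDer {F V : Type*} [Field F] [AddCommGroup V] [Module F V]
    (μ : V →ₗ[F] V →ₗ[F] V) (α : V →ₗ[F] V) (k : ℕ) (D : V →ₗ[F] V) : Prop :=
  D ∘ₗ α = α ∘ₗ D ∧ ∃ D' : V →ₗ[F] V,
    D' ∘ₗ α = α ∘ₗ D' ∧
    ∀ x y : V, μ (D x) ((α ^ k) y) + μ ((α ^ k) x) (D y) = D' (μ x y)

/-- `D` lies in the `α^k`-quasicentroid of the Hom-Jordan algebra `(V, μ, α)`. -/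
def InQCentroid {F V : Type*} [Field F] [AddCommGroup V] [Module F V]
    (μ : V →ₗ[F] V →ₗ[F] V) (α : V →ₗ[F] V) (k : ℕ) (D : V →ₗ[F] V) : Prop :=
  D ∘ₗ α = α ∘ₗ D ∧ ∀ x y : V, μ (D x) ((α ^ k) y) = μ ((α ^ k) x) (D y)

theorem stmt8 {F V : Type*} [Field F] [AddCommGroup V] [Module F V]
    (μ : V →ₗ[F] V →ₗ[F] V) (α : V →ₗ[F] V)
    (hcomm : ∀ x y : V, μ x y = μ y x)
    (hJ : ∀ x y : V, μ (α (α x)) (μ y (μ x x)) = μ (μ (α x) y) (α (μ x x)))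
    (hmult : ∀ x y : V, α (μ x y) = μ (α x) (α y))
    (k : ℕ) (D₁ D₂ : V →ₗ[F] V)
    (h₁ : IsQDer μ α k D₁) (h₂ : InQCentroid μ α k D₂) :
    IsGenDer μ α k (D₁ + D₂) := by
  obtain ⟨hc₁, D₁', hc₁', heq₁⟩ := h₁
  obtain ⟨hc₂, heq₂⟩ := h₂
  refine ⟨?_, D₁ - D₂, D₁', ?_, hc₁', fun x y => ?_⟩
  · simp only [LinearMap.add_comp, LinearMap.comp_add, hc₁, hc₂]
  · simp only [LinearMap.sub_comp, LinearMap.comp_sub, hc₁, hc₂]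
  · have := heq₁ x y
    have h2 := heq₂ x y
    simp only [LinearMap.add_apply, LinearMap.sub_apply, map_add, map_sub,
      LinearMap.add_apply, LinearMap.sub_apply] at *
    rw [h2, ← this]
    abel
end

section
/- Let (V, μ, α) be a multiplicative Hom-Jordan algebra over a field F of characteristic different from 2. Then every generalized α^k-derivation of V (k ≥ 0) is the sum of an α^k-quasiderivation of V and an element of the α^k-quasicentroid QC_{α^k}(V). Concretely, if D is a generalized α^k-derivation with associated maps D', D'' (so that μ(D(x), α^k(y)) + μ(α^k(x), D'(y)) = D''(μ(x,y)) for all x, y), then (D + D')/2 is an α^k-quasiderivation and (D − D')/2 lies in QC_{α^k}(V). -/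
theorem stmt10 {F V : Type*} [Field F] [AddCommGroup V] [Module F V]
    (μ : V →ₗ[F] V →ₗ[F] V) (α : V →ₗ[F] V)
    (hcomm : ∀ x y : V, μ x y = μ y x)
    (hJ : ∀ x y : V, μ (α (α x)) (μ y (μ x x)) = μ (μ (α x) y) (α (μ x x)))
    (hmult : ∀ x y : V, α (μ x y) = μ (α x) (α y))
    (hchar : (2 : F) ≠ 0) (k : ℕ) :
    (∀ D : V →ₗ[F] V, IsGenDer μ α k D →
      ∃ Q C : V →ₗ[F] V, IsQDer μ α k Q ∧ InQCentroid μ α k C ∧ D = Q + C) ∧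
    (∀ D D' D'' : V →ₗ[F] V,
      D ∘ₗ α = α ∘ₗ D → D' ∘ₗ α = α ∘ₗ D' → D'' ∘ₗ α = α ∘ₗ D'' →
      (∀ x y : V, μ (D x) ((α ^ k) y) + μ ((α ^ k) x) (D' y) = D'' (μ x y)) →
      IsQDer μ α k ((2 : F)⁻¹ • (D + D')) ∧
        InQCentroid μ α k ((2 : F)⁻¹ • (D - D'))) := by
  have main : ∀ D D' D'' : V →ₗ[F] V,
      D ∘ₗ α = α ∘ₗ D → D' ∘ₗ α = α ∘ₗ D' → D'' ∘ₗ α = α ∘ₗ D'' →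
      (∀ x y : V, μ (D x) ((α ^ k) y) + μ ((α ^ k) x) (D' y) = D'' (μ x y)) →
      IsQDer μ α k ((2 : F)⁻¹ • (D + D')) ∧
        InQCentroid μ α k ((2 : F)⁻¹ • (D - D')) := by
    intro D D' D'' hD hD' hD'' h
    have h2 : ∀ x y : V, μ (D' x) ((α ^ k) y) + μ ((α ^ k) x) (D y) = D'' (μ x y) := by
      intro x y
      have hyx := h y x
      rw [hcomm y x] at hyx
      rw [hcomm (D' x), hcomm ((α ^ k) x), ← hyx, add_comm]
    have hcompQ : ((2 : F)⁻¹ • (D + D')) ∘ₗ α = α ∘ₗ ((2 : F)⁻¹ • (D + D')) := by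
      ext x
      have e1 := LinearMap.ext_iff.mp hD x
      have e2 := LinearMap.ext_iff.mp hD' x
      simp only [LinearMap.comp_apply, LinearMap.smul_apply, LinearMap.add_apply] at *
      rw [e1, e2, map_smul, map_add]
    have hcompC : ((2 : F)⁻¹ • (D - D')) ∘ₗ α = α ∘ₗ ((2 : F)⁻¹ • (D - D')) := by
      ext x
      have e1 := LinearMap.ext_iff.mp hD x
      have e2 := LinearMap.ext_iff.mp hD' x
      simp only [LinearMap.comp_apply, LinearMap.smul_apply, LinearMap.sub_apply] at *
      rw [e1, e2, map_smul, map_sub]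
    constructor
    · refine ⟨hcompQ, D'', hD'', ?_⟩
      intro x y
      have key : μ (D x) ((α ^ k) y) + μ ((α ^ k) x) (D' y)
          + (μ (D' x) ((α ^ k) y) + μ ((α ^ k) x) (D y)) = (2 : F) • D'' (μ x y) := by
        rw [h x y, h2 x y, two_smul]
      have goal2 : (2 : F)⁻¹ • (μ (D x) ((α ^ k) y) + μ ((α ^ k) x) (D' y)
          + (μ (D' x) ((α ^ k) y) + μ ((α ^ k) x) (D y))) = D'' (μ x y) := by
        rw [key, smul_smul, inv_mul_cancel₀ hchar, one_smul]
      simp only [LinearMap.smul_apply, LinearMap.add_apply, map_add, map_smul]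
      rw [← goal2]
      simp only [smul_add]
      abel
    · refine ⟨hcompC, ?_⟩
      intro x y
      have key : μ (D x) ((α ^ k) y) - μ (D' x) ((α ^ k) y)
          = μ ((α ^ k) x) (D y) - μ ((α ^ k) x) (D' y) := by
        rw [sub_eq_sub_iff_add_eq_add, h x y, add_comm, h2 x y]
      simp only [LinearMap.smul_apply, LinearMap.sub_apply, map_sub, map_smul]
      rw [key]
  refine ⟨?_, main⟩
  intro D hGD
  obtain ⟨hDα, D', D'', hD'α, hD''α, h⟩ := hGD
  obtain ⟨hQ, hC⟩ := main D D' D'' hDα hD'α hD''α h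
  refine ⟨_, _, hQ, hC, ?_⟩
  ext x
  simp only [LinearMap.add_apply, LinearMap.smul_apply, LinearMap.sub_apply]
  rw [← smul_add]
  rw [show D x + D' x + (D x - D' x) = (2 : F) • D x by rw [two_smul]; abel]
  rw [smul_smul, inv_mul_cancel₀ hchar, one_smul]
end

section
/- Let (V, μ, α) be a multiplicative Hom-Jordan algebra over a field F with α surjective, and suppose V is the internal direct sum of two Hom-ideals V₁ and V₂ (i.e. V = V₁ + V₂ and V₁ ∩ V₂ = {0}). Then the centralizer satisfies Z(V) = Z(V₁) ⊕ Z(V₂), where Z(Vᵢ) = {x ∈ Vᵢ | μ(x, y) = 0 for all y ∈ Vᵢ}. -/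
theorem stmt11 {F V : Type*} [Field F] [AddCommGroup V] [Module F V]
    (μ : V →ₗ[F] V →ₗ[F] V) (α : V →ₗ[F] V)
    (hcomm : ∀ x y : V, μ x y = μ y x)
    (hJ : ∀ x y : V, μ (α (α x)) (μ y (μ x x)) = μ (μ (α x) y) (α (μ x x)))
    (hmult : ∀ x y : V, α (μ x y) = μ (α x) (α y))
    (hsurj : Function.Surjective α)
    (V₁ V₂ : Submodule F V)
    (hα₁ : ∀ x ∈ V₁, α x ∈ V₁) (hideal₁ : ∀ x ∈ V₁, ∀ y : V, μ x y ∈ V₁)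
    (hα₂ : ∀ x ∈ V₂, α x ∈ V₂) (hideal₂ : ∀ x ∈ V₂, ∀ y : V, μ x y ∈ V₂)
    (hsum : V₁ ⊔ V₂ = ⊤) (hdisj : V₁ ⊓ V₂ = ⊥) :
    {x : V | ∀ y : V, μ x y = 0} =
      {x : V | ∃ x₁ x₂ : V, x₁ ∈ V₁ ∧ x₂ ∈ V₂ ∧
        (∀ y ∈ V₁, μ x₁ y = 0) ∧ (∀ y ∈ V₂, μ x₂ y = 0) ∧ x = x₁ + x₂} := by
  -- cross products vanish
  have hcross : ∀ a ∈ V₁, ∀ b ∈ V₂, μ a b = 0 := by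
    intro a ha b hb
    have h1 : μ a b ∈ V₁ := hideal₁ a ha b
    have h2 : μ a b ∈ V₂ := by rw [hcomm]; exact hideal₂ b hb a
    have : μ a b ∈ V₁ ⊓ V₂ := ⟨h1, h2⟩
    rwa [hdisj, Submodule.mem_bot] at this
  ext x
  simp only [Set.mem_setOf_eq]
  constructor
  · intro hx
    have hxmem : x ∈ V₁ ⊔ V₂ := by rw [hsum]; trivial
    obtain ⟨x₁, hx₁, x₂, hx₂, hxeq⟩ := Submodule.mem_sup.mp hxmem
    refine ⟨x₁, x₂, hx₁, hx₂, ?_, ?_, hxeq.symm⟩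
    · intro y hy
      have := hx y
      rw [← hxeq] at this
      have h2 : μ x₂ y = 0 := by rw [hcomm]; exact hcross y hy x₂ hx₂
      simpa [map_add, LinearMap.add_apply, h2] using this
    · intro y hy
      have := hx y
      rw [← hxeq] at this
      have h1 : μ x₁ y = 0 := hcross x₁ hx₁ y hy
      simpa [map_add, LinearMap.add_apply, h1] using this
  · rintro ⟨x₁, x₂, hx₁, hx₂, hz₁, hz₂, rfl⟩ y
    have hymem : y ∈ V₁ ⊔ V₂ := by rw [hsum]; trivial
    obtain ⟨y₁, hy₁, y₂, hy₂, hyeq⟩ := Submodule.mem_sup.mp hymem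
    rw [← hyeq]
    have c12 : μ x₁ y₂ = 0 := hcross x₁ hx₁ y₂ hy₂
    have c21 : μ x₂ y₁ = 0 := by rw [hcomm]; exact hcross y₁ hy₁ x₂ hx₂
    simp [map_add, LinearMap.add_apply, hz₁ y₁ hy₁, hz₂ y₂ hy₂, c12, c21]
end
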